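/- Fix j and suppose the componentwise integral inequality e^{-λ_j t} u_j(t) ≤ |ξ_j − ζ_j| + ∫₀ᵗ e^{-λ_j τ} Σ_i H_j^i u_i(τ) dτ holds, where u_i(t) = |x_i(t,ξ,α) − x_i(t,ζ,α)|, and that G satisfies u_i(t) ≤ Σ_{n,k} e^{γ_k t} G_{i,k}^n |ξ_n − ζ_n| with G_{i,j}^n = 0 for all i ≠ j and all n. Then u_j(t) ≤ |ξ_j − ζ_j| e^{γ_j t} + Σ_{n, i≠j, m≠j} ((e^{γ_m t} − e^{γ_j t})/(γ_m − γ_j)) H_j^i G_{i,m}^n |ξ_n − ζ_n|, where γ_j = λ_j + H_j^j and the γ's are pairwise distinct. -/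

import Mathlib

open intervalIntegral MeasureTheory Real Finset

lemma gron (K a : ℝ) (hK : 0 ≤ K) (v g : ℝ → ℝ) (hv : Continuous v) (hg : Continuous g)
    (h : ∀ t, 0 ≤ t → v t ≤ a + ∫ τ in (0:ℝ)..t, (K * v τ + g τ)) :
    ∀ t, 0 ≤ t → v t ≤ (a + ∫ τ in (0:ℝ)..t, g τ * Real.exp (-(K*τ))) * Real.exp (K*t) := by
  set W : ℝ → ℝ := fun t => a + ∫ τ in (0:ℝ)..t, (K * v τ + g τ) with hWdef
  have hc1 : Continuous (fun τ => K * v τ + g τ) := by continuity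
  have hc2 : Continuous (fun τ => g τ * Real.exp (-(K*τ))) := by continuity
  have hW : ∀ t : ℝ, HasDerivAt W (K * v t + g t) t := by
    intro t
    exact (integral_hasDerivAt_right (hc1.intervalIntegrable 0 t)
      (hc1.aestronglyMeasurable.stronglyMeasurableAtFilter) hc1.continuousAt).const_add a
  set F : ℝ → ℝ := fun t => W t * Real.exp (-(K*t)) - ∫ τ in (0:ℝ)..t, g τ * Real.exp (-(K*τ))
    with hFdef
  have hF : ∀ t : ℝ, HasDerivAt F ((K * v t + g t) * Real.exp (-(K*t))
      + W t * (Real.exp (-(K*t)) * (-K)) - g t * Real.exp (-(K*t))) t := by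
    intro t
    have h1 : HasDerivAt (fun t => Real.exp (-(K*t))) (Real.exp (-(K*t)) * (-K)) t := by
      have := ((hasDerivAt_id t).const_mul K).neg.exp
      simpa using this
    have h2 := (hW t).mul h1
    have h3 : HasDerivAt (fun t => ∫ τ in (0:ℝ)..t, g τ * Real.exp (-(K*τ)))
        (g t * Real.exp (-(K*t))) t :=
      integral_hasDerivAt_right (hc2.intervalIntegrable 0 t)
        (hc2.aestronglyMeasurable.stronglyMeasurableAtFilter) hc2.continuousAt
    exact h2.sub h3
  have hFanti : AntitoneOn F (Set.Ici (0:ℝ)) := by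
    apply antitoneOn_of_deriv_nonpos (convex_Ici 0)
      (fun t _ => ((hF t).continuousAt).continuousWithinAt)
      (fun t ht => ((hF t).differentiableAt).differentiableWithinAt)
    intro t ht
    rw [interior_Ici] at ht
    rw [(hF t).deriv]
    have hvW : v t ≤ W t := h t ht.le
    have : (K * v t + g t) * Real.exp (-(K*t)) + W t * (Real.exp (-(K*t)) * (-K))
        - g t * Real.exp (-(K*t)) = K * (v t - W t) * Real.exp (-(K*t)) := by ring
    rw [this]
    have : v t - W t ≤ 0 := by linarith
    have := mul_nonpos_of_nonneg_of_nonpos hK this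
    exact mul_nonpos_of_nonpos_of_nonneg this (Real.exp_nonneg _)
  intro t ht
  have hle : F t ≤ F 0 := hFanti Set.self_mem_Ici ht ht
  have hF0 : F 0 = a := by simp [hFdef, hWdef]
  have hvW : v t ≤ W t := h t ht
  have : W t * Real.exp (-(K*t)) ≤ a + ∫ τ in (0:ℝ)..t, g τ * Real.exp (-(K*τ)) := by
    have := hle; rw [hF0] at this; simp only [hFdef] at this; linarith
  calc v t ≤ W t := hvW
    _ = W t * Real.exp (-(K*t)) * Real.exp (K*t) := by
        rw [mul_assoc, ← Real.exp_add]; simp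
    _ ≤ (a + ∫ τ in (0:ℝ)..t, g τ * Real.exp (-(K*τ))) * Real.exp (K*t) := by
        apply mul_le_mul_of_nonneg_right this (Real.exp_nonneg _)

lemma int_exp_mul (c : ℝ) (hc : c ≠ 0) (t : ℝ) :
    ∫ τ in (0:ℝ)..t, Real.exp (c * τ) = (Real.exp (c*t) - 1)/c := by
  rw [intervalIntegral.integral_comp_mul_left (fun x => Real.exp x) hc]
  simp [integral_exp, mul_comm, div_eq_inv_mul]

/-- Bootstrapping step for componentwise Gronwall estimates (Theorem on 𝒯_j). -/
theorem stmt9 (m : ℕ) (lam : Fin m → ℝ) (H : Fin m → Fin m → ℝ) (hH : ∀ i j, 0 ≤ H i j)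
    (γ : Fin (m+1) → ℝ) (hγ : ∀ i : Fin m, γ i.succ = lam i + H i i)
    (hγdist : Function.Injective γ)
    (d : Fin m → ℝ) (hd : ∀ n, 0 ≤ d n)
    (u : Fin m → ℝ → ℝ) (hucont : ∀ i, Continuous (u i))
    (hunn : ∀ i t, 0 ≤ t → 0 ≤ u i t)
    (G : Fin m → Fin (m+1) → Fin m → ℝ)
    (j : Fin m)
    (hineq : ∀ t, 0 ≤ t →
      Real.exp (-(lam j * t)) * u j t ≤ d j
        + ∫ τ in (0:ℝ)..t, Real.exp (-(lam j * τ)) * ∑ i, H j i * u i τ)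
    (hG : ∀ i t, 0 ≤ t → u i t ≤ ∑ n, ∑ k, Real.exp (γ k * t) * G i k n * d n)
    (hG0 : ∀ i n, i ≠ j → G i j.succ n = 0) :
    ∀ t, 0 ≤ t →
      u j t ≤ d j * Real.exp (γ j.succ * t)
        + ∑ n, ∑ i ∈ Finset.univ.erase j, ∑ k ∈ Finset.univ.erase j.succ,
            (Real.exp (γ k * t) - Real.exp (γ j.succ * t)) / (γ k - γ j.succ)
              * H j i * G i k n * d n := by
  set K := H j j with hK
  set lj := lam j with hlj
  set v : ℝ → ℝ := fun t => Real.exp (-(lj * t)) * u j t with hv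
  set g : ℝ → ℝ := fun τ => ∑ i ∈ Finset.univ.erase j, ∑ n, ∑ k ∈ Finset.univ.erase j.succ,
      H j i * G i k n * d n * Real.exp ((γ k - lj) * τ) with hg
  have hγj : γ j.succ = lj + K := hγ j
  have hexp : ∀ c : ℝ, Continuous fun τ : ℝ => Real.exp (c * τ) :=
    fun c => Real.continuous_exp.comp (continuous_const.mul continuous_id)
  have hexp' : ∀ c : ℝ, Continuous fun τ : ℝ => Real.exp (-(c * τ)) :=
    fun c => Real.continuous_exp.comp (continuous_const.mul continuous_id).neg
  have hvc : Continuous v := (hexp' lj).mul (hucont j)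
  have hgc : Continuous g := by
    apply continuous_finset_sum; intro i _
    apply continuous_finset_sum; intro n _
    apply continuous_finset_sum; intro k _
    exact continuous_const.mul (hexp _)
  -- the integral hypothesis in the form needed for gron
  have key : ∀ t, 0 ≤ t → v t ≤ d j + ∫ τ in (0:ℝ)..t, (K * v τ + g τ) := by
    intro t ht
    refine le_trans (hineq t ht) (add_le_add_right ?_ _)
    apply intervalIntegral.integral_mono_on ht
    · exact Continuous.intervalIntegrable
        ((hexp' lj).mul (continuous_finset_sum _ fun i _ => continuous_const.mul (hucont i))) 0 t
    · exact Continuous.intervalIntegrable ((continuous_const.mul hvc).add hgc) 0 t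
    intro τ hτ
    obtain ⟨hτ0, hτt⟩ := hτ
    -- split off the i = j term
    have hsplit : (∑ i, H j i * u i τ)
        = H j j * u j τ + ∑ i ∈ Finset.univ.erase j, H j i * u i τ :=
      (Finset.add_sum_erase _ _ (Finset.mem_univ j)).symm
    rw [hsplit, mul_add]
    have h1 : Real.exp (-(lj * τ)) * (H j j * u j τ) = K * v τ := by
      simp only [hv]; ring
    rw [h1]
    refine add_le_add_right ?_ _
    rw [Finset.mul_sum]
    simp only [hg]
    apply Finset.sum_le_sum
    intro i hi
    have hij : i ≠ j := Finset.ne_of_mem_erase hi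
    -- bound u i τ
    have hub : u i τ ≤ ∑ n, ∑ k ∈ Finset.univ.erase j.succ,
        Real.exp (γ k * τ) * G i k n * d n := by
      refine le_trans (hG i τ hτ0) (le_of_eq ?_)
      apply Finset.sum_congr rfl
      intro n _
      rw [← Finset.add_sum_erase _ _ (Finset.mem_univ j.succ), hG0 i n hij,
        mul_zero, zero_mul, zero_add]
    calc Real.exp (-(lj * τ)) * (H j i * u i τ)
        ≤ Real.exp (-(lj * τ)) * (H j i * ∑ n, ∑ k ∈ Finset.univ.erase j.succ,
            Real.exp (γ k * τ) * G i k n * d n) := by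
          apply mul_le_mul_of_nonneg_left _ (Real.exp_nonneg _)
          exact mul_le_mul_of_nonneg_left hub (hH j i)
      _ = ∑ n, ∑ k ∈ Finset.univ.erase j.succ,
            H j i * G i k n * d n * Real.exp ((γ k - lj) * τ) := by
          simp only [Finset.mul_sum]
          apply Finset.sum_congr rfl; intro n _
          apply Finset.sum_congr rfl; intro k _
          rw [show (γ k - lj) * τ = γ k * τ + -(lj * τ) by ring, Real.exp_add]
          ring
  have hbound := gron K (d j) (hH j j) v g hvc hgc key
  intro t ht
  have hb := hbound t ht
  -- compute the integral
  have hint : (∫ τ in (0:ℝ)..t, g τ * Real.exp (-(K*τ)))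
      = ∑ i ∈ Finset.univ.erase j, ∑ n, ∑ k ∈ Finset.univ.erase j.succ,
          H j i * G i k n * d n
            * ((Real.exp ((γ k - γ j.succ) * t) - 1) / (γ k - γ j.succ)) := by
    have hrw : ∀ τ : ℝ, g τ * Real.exp (-(K*τ))
        = ∑ i ∈ Finset.univ.erase j, ∑ n, ∑ k ∈ Finset.univ.erase j.succ,
            H j i * G i k n * d n * Real.exp ((γ k - γ j.succ) * τ) := by
      intro τ
      simp only [hg, Finset.sum_mul]
      apply Finset.sum_congr rfl; intro i _
      apply Finset.sum_congr rfl; intro n _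
      apply Finset.sum_congr rfl; intro k _
      rw [mul_assoc, ← Real.exp_add, hγj]
      congr 2
      ring
    rw [intervalIntegral.integral_congr (fun τ _ => hrw τ)]
    rw [intervalIntegral.integral_finset_sum]
    swap
    · intro i _
      exact Continuous.intervalIntegrable (continuous_finset_sum _ fun n _ =>
        continuous_finset_sum _ fun k _ => continuous_const.mul (hexp _)) 0 t
    apply Finset.sum_congr rfl; intro i _
    rw [intervalIntegral.integral_finset_sum]
    swap
    · intro n _
      exact Continuous.intervalIntegrable (continuous_finset_sum _ fun k _ =>
        continuous_const.mul (hexp _)) 0 t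
    apply Finset.sum_congr rfl; intro n _
    rw [intervalIntegral.integral_finset_sum]
    swap
    · intro k _
      exact Continuous.intervalIntegrable (continuous_const.mul (hexp _)) 0 t
    apply Finset.sum_congr rfl; intro k hk
    have hkne : γ k - γ j.succ ≠ 0 := by
      have : k ≠ j.succ := Finset.ne_of_mem_erase hk
      exact sub_ne_zero_of_ne (fun h => this (hγdist h))
    rw [intervalIntegral.integral_const_mul, int_exp_mul _ hkne]
  rw [hint] at hb
  -- convert v bound to u bound
  have huv : u j t = v t * Real.exp (lj * t) := by
    simp only [hv]
    rw [mul_comm (Real.exp _) (u j t), mul_assoc, ← Real.exp_add]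
    simp
  rw [huv]
  have hbb := mul_le_mul_of_nonneg_right hb (Real.exp_nonneg (lj * t))
  refine le_trans hbb (le_of_eq ?_)
  have he : Real.exp (K*t) * Real.exp (lj*t) = Real.exp (γ j.succ * t) := by
    rw [← Real.exp_add, hγj]; ring_nf
  rw [mul_assoc, he, add_mul]
  congr 1
  -- the sums
  rw [Finset.sum_mul]
  rw [Finset.sum_comm]
  apply Finset.sum_congr rfl; intro n _
  rw [Finset.sum_mul]
  apply Finset.sum_congr rfl; intro i _
  rw [Finset.sum_mul]
  apply Finset.sum_congr rfl; intro k hk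
  have hkne : γ k - γ j.succ ≠ 0 := by
    have : k ≠ j.succ := Finset.ne_of_mem_erase hk
    exact sub_ne_zero_of_ne (fun h => this (hγdist h))
  have hx : (Real.exp ((γ k - γ j.succ) * t) - 1) * Real.exp (γ j.succ * t)
      = Real.exp (γ k * t) - Real.exp (γ j.succ * t) := by
    rw [sub_mul, one_mul, ← Real.exp_add]
    congr 2
    ring
  field_simp
  linear_combination (H j n * G n k i * d i) * hx
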